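/- (Tangent-transform lower bound for the Bernoulli likelihood.) For every real ξ ≠ 0, every real η, and every y ∈ {0, 1}, exp(yη)/(1 + exp(η)) ≥ exp( A(ξ) η² + (y − 1/2) η + C(ξ) ). Equivalently, for every ξ ≠ 0 and every real η, log(1 + e^{η}) ≤ log(1 + e^{ξ}) + (η − ξ)/2 + (tanh(ξ/2)/(4ξ)) (η² − ξ²). -/
import Mathlib

open Real

private lemma myHasDerivAt_tanh (x : ℝ) :
    HasDerivAt Real.tanh (1 / Real.cosh x ^ 2) x := by
  have h := ((Real.hasDerivAt_sinh x).div (Real.hasDerivAt_cosh x)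
    (Real.cosh_pos x).ne')
  have heq : (Real.cosh x * Real.cosh x - Real.sinh x * Real.sinh x) / Real.cosh x ^ 2
      = 1 / Real.cosh x ^ 2 := by
    have h2 := Real.cosh_sq_sub_sinh_sq x
    congr 1
    nlinarith [h2]
  have h3 : HasDerivAt (fun y => Real.sinh y / Real.cosh y) (1 / Real.cosh x ^ 2) x := by
    rw [← heq]; exact h
  exact h3.congr_of_eventuallyEq
    (Filter.Eventually.of_forall fun y => (Real.tanh_eq_sinh_div_cosh y))

private lemma self_lt_sinh_mul_cosh {x : ℝ} (hx : 0 < x) :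
    x < Real.sinh x * Real.cosh x := by
  have h : 2 * x < Real.sinh (2 * x) := Real.self_lt_sinh_iff.mpr (by linarith)
  rw [Real.sinh_two_mul] at h
  linarith

/-- Key monotonicity: `tanh x / x` is antitone, in product form. -/
private lemma tanh_mul_le {s t : ℝ} (hs : 0 ≤ s) (hst : s ≤ t) :
    Real.tanh t * s ≤ Real.tanh s * t := by
  rcases eq_or_lt_of_le hs with rfl | hs'
  · simp only [mul_zero, Real.tanh_zero, zero_mul, le_refl]
  have hanti : AntitoneOn (fun x => Real.tanh x / x) (Set.Icc s t) := by
    apply antitoneOn_of_deriv_nonpos (convex_Icc s t)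
    · intro x hx
      have hx0 : 0 < x := lt_of_lt_of_le hs' hx.1
      have hD : HasDerivAt (fun x => Real.tanh x / x)
          ((1 / Real.cosh x ^ 2 * x - Real.tanh x * 1) / x ^ 2) x :=
        (myHasDerivAt_tanh x).div (hasDerivAt_id x) hx0.ne'
      exact hD.continuousAt.continuousWithinAt
    · intro x hx
      rw [interior_Icc] at hx
      have hx0 : 0 < x := lt_of_lt_of_le hs' hx.1.le
      have hD : HasDerivAt (fun x => Real.tanh x / x)
          ((1 / Real.cosh x ^ 2 * x - Real.tanh x * 1) / x ^ 2) x :=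
        (myHasDerivAt_tanh x).div (hasDerivAt_id x) hx0.ne'
      exact hD.differentiableAt.differentiableWithinAt
    · intro x hx
      rw [interior_Icc] at hx
      have hx0 : 0 < x := lt_of_lt_of_le hs' hx.1.le
      have hD : HasDerivAt (fun x => Real.tanh x / x)
          ((1 / Real.cosh x ^ 2 * x - Real.tanh x * 1) / x ^ 2) x :=
        (myHasDerivAt_tanh x).div (hasDerivAt_id x) hx0.ne'
      rw [hD.deriv]
      have hc := Real.cosh_pos x
      have hkey : x < Real.sinh x * Real.cosh x := self_lt_sinh_mul_cosh hx0
      have hnum : 1 / Real.cosh x ^ 2 * x - Real.tanh x * 1 ≤ 0 := by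
        rw [Real.tanh_eq_sinh_div_cosh, mul_one, div_mul_eq_mul_div,
          div_sub_div _ _ (by positivity : (Real.cosh x ^ 2 : ℝ) ≠ 0) hc.ne',
          div_nonpos_iff]
        right
        refine ⟨by nlinarith [mul_lt_mul_of_pos_left hkey hc], by positivity⟩
      exact div_nonpos_of_nonpos_of_nonneg hnum (by positivity)
  have h := hanti (Set.left_mem_Icc.mpr hst) (Set.right_mem_Icc.mpr hst) hst
  simp only at h
  rw [div_le_div_iff₀ (lt_of_lt_of_le hs' hst) hs'] at h
  linarith

/-- Core analytic inequality: tangent bound for `log ∘ cosh` in the square variable. -/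
private lemma logcosh_tangent {a b : ℝ} (ha : 0 ≤ a) (hb : 0 < b) :
    Real.log (Real.cosh a)
      ≤ Real.log (Real.cosh b) + Real.tanh b / (2 * b) * (a ^ 2 - b ^ 2) := by
  set c : ℝ := Real.tanh b / (2 * b) with hc
  set φ : ℝ → ℝ := fun x => c * x ^ 2 - Real.log (Real.cosh x) with hφ
  have hderiv : ∀ x : ℝ, HasDerivAt φ (c * (2 * x) - Real.tanh x) x := by
    intro x
    have h1 : HasDerivAt (fun x : ℝ => c * x ^ 2) (c * (2 * x)) x := by
      simpa using ((hasDerivAt_pow 2 x).const_mul c)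
    have h2 : HasDerivAt (fun x => Real.log (Real.cosh x)) (Real.tanh x) x := by
      have := (Real.hasDerivAt_cosh x).log (Real.cosh_pos x).ne'
      simpa [Real.tanh_eq_sinh_div_cosh] using this
    exact h1.sub h2
  have hgoal : φ b ≤ φ a := by
    rcases le_total a b with hab | hba
    · have hA : AntitoneOn φ (Set.Icc a b) := by
        apply antitoneOn_of_deriv_nonpos (convex_Icc a b)
        · exact fun x _ => (hderiv x).continuousAt.continuousWithinAt
        · exact fun x _ => (hderiv x).differentiableAt.differentiableWithinAt
        · intro x hx
          rw [interior_Icc] at hx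
          rw [(hderiv x).deriv]
          have hx0 : 0 ≤ x := le_trans ha hx.1.le
          have hk : Real.tanh b * x ≤ Real.tanh x * b := tanh_mul_le hx0 hx.2.le
          have hceq : c * (2 * x) = Real.tanh b * x / b := by
            rw [hc]; field_simp
          rw [hceq, sub_nonpos, div_le_iff₀ hb]
          linarith
      exact hA (Set.left_mem_Icc.mpr hab) (Set.right_mem_Icc.mpr hab) hab
    · have hM : MonotoneOn φ (Set.Icc b a) := by
        apply monotoneOn_of_deriv_nonneg (convex_Icc b a)
        · exact fun x _ => (hderiv x).continuousAt.continuousWithinAt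
        · exact fun x _ => (hderiv x).differentiableAt.differentiableWithinAt
        · intro x hx
          rw [interior_Icc] at hx
          rw [(hderiv x).deriv]
          have hk : Real.tanh x * b ≤ Real.tanh b * x := tanh_mul_le hb.le hx.1.le
          have hceq : c * (2 * x) = Real.tanh b * x / b := by
            rw [hc]; field_simp
          rw [hceq, sub_nonneg, le_div_iff₀ hb]
          linarith
      exact hM (Set.left_mem_Icc.mpr hba) (Set.right_mem_Icc.mpr hba) hba
  have hsub := sub_nonneg.mpr hgoal
  simp only [hφ] at hsub
  nlinarith [hsub]

private lemma log_one_add_exp (η : ℝ) :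
    Real.log (1 + Real.exp η) = Real.log 2 + η / 2 + Real.log (Real.cosh (η / 2)) := by
  have e1 : Real.exp (η / 2) * Real.exp (η / 2) = Real.exp η := by
    rw [← Real.exp_add]; norm_num
  have e2 : Real.exp (η / 2) * Real.exp (-(η / 2)) = 1 := by
    rw [← Real.exp_add]; simp
  have h : (1 : ℝ) + Real.exp η = 2 * Real.exp (η / 2) * Real.cosh (η / 2) := by
    rw [Real.cosh_eq]
    linear_combination (-1 : ℝ) * e1 - e2
  rw [h, Real.log_mul (by positivity) (Real.cosh_pos _).ne',
    Real.log_mul (by norm_num) (Real.exp_pos _).ne', Real.log_exp]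

/-- Main tangent-transform inequality in log form. -/
private lemma key_ineq (ξ : ℝ) (hξ : ξ ≠ 0) (η : ℝ) :
    Real.log (1 + Real.exp η)
      ≤ Real.log (1 + Real.exp ξ) + (η - ξ) / 2
        + (Real.tanh (ξ / 2) / (4 * ξ)) * (η ^ 2 - ξ ^ 2) := by
  have ha : (0 : ℝ) ≤ |η| / 2 := by positivity
  have hb : (0 : ℝ) < |ξ| / 2 := by
    have := abs_pos.mpr hξ; linarith
  have hcore := logcosh_tangent ha hb
  have hcoshη : Real.cosh (|η| / 2) = Real.cosh (η / 2) := by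
    rcases abs_cases η with ⟨h, _⟩ | ⟨h, _⟩ <;> rw [h]
    · rw [neg_div, Real.cosh_neg]
  have hcoshξ : Real.cosh (|ξ| / 2) = Real.cosh (ξ / 2) := by
    rcases abs_cases ξ with ⟨h, _⟩ | ⟨h, _⟩ <;> rw [h]
    · rw [neg_div, Real.cosh_neg]
  have hsq : (|η| / 2) ^ 2 - (|ξ| / 2) ^ 2 = (η ^ 2 - ξ ^ 2) / 4 := by
    rw [div_pow, div_pow, sq_abs, sq_abs]; ring
  have htanh : Real.tanh (|ξ| / 2) / (2 * (|ξ| / 2)) = Real.tanh (ξ / 2) / ξ := by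
    rcases abs_cases ξ with ⟨h, _⟩ | ⟨h, hneg⟩ <;> rw [h]
    · congr 1; ring
    · rw [neg_div, Real.tanh_neg]
      rw [show (2 : ℝ) * (-(ξ / 2)) = -ξ by ring, div_neg, neg_div, neg_neg]
  rw [hcoshη, hcoshξ, hsq, htanh] at hcore
  rw [log_one_add_exp η, log_one_add_exp ξ]
  have hre : Real.tanh (ξ / 2) / ξ * ((η ^ 2 - ξ ^ 2) / 4)
      = Real.tanh (ξ / 2) / (4 * ξ) * (η ^ 2 - ξ ^ 2) := by
    ring
  rw [hre] at hcore
  linarith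

/-- The quadratic coefficient `A(ξ) = −tanh(ξ/2)/(4ξ)` of the tangent transform. -/
noncomputable def tangentA (ξ : ℝ) : ℝ := -Real.tanh (ξ / 2) / (4 * ξ)

/-- The constant `C(ξ) = ξ/2 − log(1 + e^ξ) + ξ tanh(ξ/2)/4` of the tangent transform. -/
noncomputable def tangentC (ξ : ℝ) : ℝ :=
  ξ / 2 - Real.log (1 + Real.exp ξ) + ξ * Real.tanh (ξ / 2) / 4

/-- Tangent-transform lower bound for the Bernoulli likelihood (Jaakkola–Jordan):
for every `ξ ≠ 0`, `η ∈ ℝ` and `y ∈ {0,1}`,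
`exp(yη)/(1 + exp(η)) ≥ exp(A(ξ)η² + (y − 1/2)η + C(ξ))`; equivalently,
`log(1 + e^η) ≤ log(1 + e^ξ) + (η − ξ)/2 + (tanh(ξ/2)/(4ξ))(η² − ξ²)`. -/
theorem tangent_transform_lower_bound :
    (∀ ξ : ℝ, ξ ≠ 0 → ∀ η : ℝ, ∀ y : ℝ, y = 0 ∨ y = 1 →
      Real.exp (tangentA ξ * η ^ 2 + (y - 1 / 2) * η + tangentC ξ)
        ≤ Real.exp (y * η) / (1 + Real.exp η))
    ∧ (∀ ξ : ℝ, ξ ≠ 0 → ∀ η : ℝ,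
      Real.log (1 + Real.exp η)
        ≤ Real.log (1 + Real.exp ξ) + (η - ξ) / 2
          + (Real.tanh (ξ / 2) / (4 * ξ)) * (η ^ 2 - ξ ^ 2)) := by
  constructor
  · intro ξ hξ η y _hy
    have hpos : (0 : ℝ) < 1 + Real.exp η := by positivity
    rw [le_div_iff₀ hpos]
    rw [← Real.exp_log hpos, ← Real.exp_add, Real.exp_le_exp]
    have hk := key_ineq ξ hξ η
    have hAC : tangentA ξ * η ^ 2 + (y - 1 / 2) * η + tangentC ξ
        = y * η - ((η - ξ) / 2 + Real.tanh (ξ / 2) / (4 * ξ) * (η ^ 2 - ξ ^ 2)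
          + Real.log (1 + Real.exp ξ)) := by
      unfold tangentA tangentC
      field_simp
      ring
    rw [hAC]
    linarith
  · exact key_ineq
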